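/- arXiv:cs/0306120 — 2 statements merged into one kernel-verified Lean document; each statement's English description precedes it below -/
import Mathlib

section
/- (Separation of estimation and control.) Let R be an m×m real symmetric positive definite matrix, Π an n×n real symmetric positive semidefinite matrix, F (n×n) and G (n×m) real matrices, and x̂ ∈ ℝⁿ. Let (Ω, F, P) be a probability space and e : Ω → ℝⁿ a random vector with E[e] = 0 such that e and ω ↦ (Fe(ω))ᵀΠ(Fe(ω)) are integrable. Then the function u ↦ E[ uᵀRu + (Fx̂ + Fe + Gu)ᵀΠ(Fx̂ + Fe + Gu) ] on ℝᵐ attains its minimum at the unique point u* = -(R + GᵀΠG)⁻¹(GᵀΠF)x̂; in particular, the minimizer coincides with the greedy control computed from the estimated state x̂ as if it were the true state. -/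
open Matrix MeasureTheory

lemma sep_dot_swap {k : ℕ} {M : Matrix (Fin k) (Fin k) ℝ} (hM : Mᵀ = M)
    (a b : Fin k → ℝ) : a ⬝ᵥ (M *ᵥ b) = b ⬝ᵥ (M *ᵥ a) := by
  rw [dotProduct_mulVec]
  nth_rewrite 1 [← hM]
  rw [vecMul_transpose, dotProduct_comm]

lemma sep_mulVec_dot {k l : ℕ} (A : Matrix (Fin k) (Fin l) ℝ) (x : Fin l → ℝ)
    (y : Fin k → ℝ) : (A *ᵥ x) ⬝ᵥ y = x ⬝ᵥ (Aᵀ *ᵥ y) := by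
  rw [dotProduct_comm, dotProduct_mulVec, dotProduct_comm, mulVec_transpose]

lemma sep_expand {k : ℕ} {P : Matrix (Fin k) (Fin k) ℝ} (hP : Pᵀ = P)
    (a c : Fin k → ℝ) :
    (a + c) ⬝ᵥ (P *ᵥ (a + c))
      = a ⬝ᵥ (P *ᵥ a) + 2 * (a ⬝ᵥ (P *ᵥ c)) + c ⬝ᵥ (P *ᵥ c) := by
  rw [mulVec_add, dotProduct_add, add_dotProduct, add_dotProduct,
    sep_dot_swap hP c a]
  ring

lemma sep_quad_key {k : ℕ} {M : Matrix (Fin k) (Fin k) ℝ} (hM : M.PosDef)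
    (hsym : Mᵀ = M) (b v u : Fin k → ℝ) (hv : M *ᵥ v = -b) :
    (v ⬝ᵥ (M *ᵥ v) + 2 * (b ⬝ᵥ v)) ≤ u ⬝ᵥ (M *ᵥ u) + 2 * (b ⬝ᵥ u) ∧
    (v ⬝ᵥ (M *ᵥ v) + 2 * (b ⬝ᵥ v) = u ⬝ᵥ (M *ᵥ u) + 2 * (b ⬝ᵥ u) → u = v) := by
  have h2 : v ⬝ᵥ (M *ᵥ u) = -(u ⬝ᵥ b) := by
    rw [sep_dot_swap hsym, hv, dotProduct_neg]
  have h2' : u ⬝ᵥ (M *ᵥ v) = -(u ⬝ᵥ b) := by rw [hv, dotProduct_neg]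
  have h3 : v ⬝ᵥ (M *ᵥ v) = -(v ⬝ᵥ b) := by rw [hv, dotProduct_neg]
  have h4 : (u - v) ⬝ᵥ (M *ᵥ (u - v))
      = u ⬝ᵥ (M *ᵥ u) - u ⬝ᵥ (M *ᵥ v) - v ⬝ᵥ (M *ᵥ u) + v ⬝ᵥ (M *ᵥ v) := by
    rw [mulVec_sub, dotProduct_sub, sub_dotProduct, sub_dotProduct]
    ring
  have hbu : b ⬝ᵥ u = u ⬝ᵥ b := dotProduct_comm _ _
  have hbv : b ⬝ᵥ v = v ⬝ᵥ b := dotProduct_comm _ _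
  have key : (u ⬝ᵥ (M *ᵥ u) + 2 * (b ⬝ᵥ u)) - (v ⬝ᵥ (M *ᵥ v) + 2 * (b ⬝ᵥ v))
      = (u - v) ⬝ᵥ (M *ᵥ (u - v)) := by
    rw [h4, h2, h2', h3, hbu, hbv]; ring
  have hpos : 0 ≤ (u - v) ⬝ᵥ (M *ᵥ (u - v)) := by
    simpa using hM.posSemidef.dotProduct_mulVec_nonneg (u - v)
  constructor
  · linarith [key, hpos]
  · intro h
    by_contra hne
    have hd : u - v ≠ 0 := sub_ne_zero.mpr hne
    have := hM.dotProduct_mulVec_pos hd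
    simp only [star_trivial] at this
    rw [← key] at this
    linarith

lemma sep_integral {Ω : Type*} [MeasurableSpace Ω] (μ : Measure Ω) [IsProbabilityMeasure μ]
    {n : ℕ} (P : Matrix (Fin n) (Fin n) ℝ) (hPs : Pᵀ = P)
    (F : Matrix (Fin n) (Fin n) ℝ)
    (e : Ω → Fin n → ℝ) (he : Integrable e μ)
    (heP : Integrable (fun ω => (F *ᵥ e ω) ⬝ᵥ (P *ᵥ (F *ᵥ e ω))) μ)
    (hmean : ∫ ω, e ω ∂μ = 0)
    (a : Fin n → ℝ) (r : ℝ) :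
    ∫ ω, (r + (a + F *ᵥ e ω) ⬝ᵥ (P *ᵥ (a + F *ᵥ e ω))) ∂μ
      = r + a ⬝ᵥ (P *ᵥ a) + ∫ ω, (F *ᵥ e ω) ⬝ᵥ (P *ᵥ (F *ᵥ e ω)) ∂μ := by
  set w : Fin n → ℝ := (P * F)ᵀ *ᵥ a with hwdef
  have hw : ∀ v : Fin n → ℝ, a ⬝ᵥ (P *ᵥ (F *ᵥ v)) = w ⬝ᵥ v := by
    intro v
    calc a ⬝ᵥ (P *ᵥ (F *ᵥ v)) = a ⬝ᵥ ((P * F)ᵀᵀ *ᵥ v) := by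
          rw [mulVec_mulVec, transpose_transpose]
      _ = w ⬝ᵥ v := (sep_mulVec_dot _ a v).symm
  let L0 : (Fin n → ℝ) →ₗ[ℝ] ℝ :=
    { toFun := fun v => w ⬝ᵥ v
      map_add' := fun x y => dotProduct_add w x y
      map_smul' := fun c x => by simp [dotProduct_smul, smul_eq_mul] }
  let L : (Fin n → ℝ) →L[ℝ] ℝ := L0.toContinuousLinearMap
  have hLapp : ∀ v, L v = w ⬝ᵥ v := fun v => rfl
  have hLint : Integrable (fun ω => L (e ω)) μ := L.integrable_comp he
  have hLmean : ∫ ω, L (e ω) ∂μ = 0 := by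
    rw [L.integral_comp_comm he, hmean, map_zero]
  have hpt : (fun ω => r + (a + F *ᵥ e ω) ⬝ᵥ (P *ᵥ (a + F *ᵥ e ω)))
      = fun ω => (r + a ⬝ᵥ (P *ᵥ a) + 2 * L (e ω))
          + (F *ᵥ e ω) ⬝ᵥ (P *ᵥ (F *ᵥ e ω)) := by
    funext ω
    rw [sep_expand hPs, hLapp, ← hw (e ω)]
    ring
  have h2int : Integrable (fun ω => 2 * L (e ω)) μ := hLint.const_mul 2
  have h1int : Integrable (fun ω => r + a ⬝ᵥ (P *ᵥ a) + 2 * L (e ω)) μ :=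
    (integrable_const (r + a ⬝ᵥ (P *ᵥ a))).add h2int
  rw [hpt]
  rw [integral_add h1int heP]
  rw [integral_add (integrable_const (r + a ⬝ᵥ (P *ᵥ a))) h2int]
  rw [integral_const, MeasureTheory.integral_const_mul, hLmean]
  simp

/-- Separation of estimation and control: if `e` is an integrable, zero-mean
random estimation error with `(Fe)ᵀΠ(Fe)` integrable, then
`u ↦ E[uᵀRu + (Fx̂ + Fe + Gu)ᵀΠ(Fx̂ + Fe + Gu)]` attains its minimum uniquely at
`u* = -(R + GᵀΠG)⁻¹(GᵀΠF)x̂`, the greedy control computed from the estimate `x̂`. -/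
theorem separation_principle_greedy_control
    {Ω : Type*} [MeasurableSpace Ω] (μ : Measure Ω) [IsProbabilityMeasure μ]
    {n m : ℕ} (R : Matrix (Fin m) (Fin m) ℝ) (hR : R.PosDef)
    (P : Matrix (Fin n) (Fin n) ℝ) (hP : P.PosSemidef)
    (F : Matrix (Fin n) (Fin n) ℝ) (G : Matrix (Fin n) (Fin m) ℝ)
    (xhat : Fin n → ℝ)
    (e : Ω → Fin n → ℝ) (he : Integrable e μ)
    (heP : Integrable (fun ω => (F *ᵥ e ω) ⬝ᵥ (P *ᵥ (F *ᵥ e ω))) μ)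
    (hmean : ∫ ω, e ω ∂μ = 0) :
    ∀ u : Fin m → ℝ,
      (∫ ω, ((-(((R + Gᵀ * P * G)⁻¹ * (Gᵀ * P * F)) *ᵥ xhat)) ⬝ᵥ
            (R *ᵥ (-(((R + Gᵀ * P * G)⁻¹ * (Gᵀ * P * F)) *ᵥ xhat)))
          + (F *ᵥ xhat + F *ᵥ e ω + G *ᵥ (-(((R + Gᵀ * P * G)⁻¹ * (Gᵀ * P * F)) *ᵥ xhat))) ⬝ᵥ
            (P *ᵥ (F *ᵥ xhat + F *ᵥ e ω
              + G *ᵥ (-(((R + Gᵀ * P * G)⁻¹ * (Gᵀ * P * F)) *ᵥ xhat))))) ∂μ)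
        ≤ ∫ ω, (u ⬝ᵥ (R *ᵥ u)
            + (F *ᵥ xhat + F *ᵥ e ω + G *ᵥ u) ⬝ᵥ
              (P *ᵥ (F *ᵥ xhat + F *ᵥ e ω + G *ᵥ u))) ∂μ
      ∧ ((∫ ω, ((-(((R + Gᵀ * P * G)⁻¹ * (Gᵀ * P * F)) *ᵥ xhat)) ⬝ᵥ
            (R *ᵥ (-(((R + Gᵀ * P * G)⁻¹ * (Gᵀ * P * F)) *ᵥ xhat)))
          + (F *ᵥ xhat + F *ᵥ e ω + G *ᵥ (-(((R + Gᵀ * P * G)⁻¹ * (Gᵀ * P * F)) *ᵥ xhat))) ⬝ᵥ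
            (P *ᵥ (F *ᵥ xhat + F *ᵥ e ω
              + G *ᵥ (-(((R + Gᵀ * P * G)⁻¹ * (Gᵀ * P * F)) *ᵥ xhat))))) ∂μ)
          = ∫ ω, (u ⬝ᵥ (R *ᵥ u)
            + (F *ᵥ xhat + F *ᵥ e ω + G *ᵥ u) ⬝ᵥ
              (P *ᵥ (F *ᵥ xhat + F *ᵥ e ω + G *ᵥ u))) ∂μ
        → u = -(((R + Gᵀ * P * G)⁻¹ * (Gᵀ * P * F)) *ᵥ xhat)) := by
  intro u
  have hPs : Pᵀ = P := by
    rw [← conjTranspose_eq_transpose_of_trivial]; exact hP.1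
  have hGPG : (Gᵀ * P * G).PosSemidef := by
    have h := hP.conjTranspose_mul_mul_same G
    rwa [conjTranspose_eq_transpose_of_trivial] at h
  have hMpd : (R + Gᵀ * P * G).PosDef := hR.add_posSemidef hGPG
  have hMsym : (R + Gᵀ * P * G)ᵀ = R + Gᵀ * P * G := by
    rw [← conjTranspose_eq_transpose_of_trivial]; exact hMpd.1
  set M := R + Gᵀ * P * G with hMdef
  set B := Gᵀ * P * F with hBdef
  set b := B *ᵥ xhat with hbdef
  set v : Fin m → ℝ := -((M⁻¹ * B) *ᵥ xhat) with hvdef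
  have hvstar : M *ᵥ v = -b := by
    rw [hvdef, mulVec_neg, mulVec_mulVec, ← Matrix.mul_assoc,
      Matrix.mul_nonsing_inv M hMpd.det_pos.ne'.isUnit, Matrix.one_mul, hbdef]
  -- bridge: the deterministic quadratic in standard form
  have hq : ∀ z : Fin m → ℝ,
      z ⬝ᵥ (R *ᵥ z) + (F *ᵥ xhat + G *ᵥ z) ⬝ᵥ (P *ᵥ (F *ᵥ xhat + G *ᵥ z))
        = (z ⬝ᵥ (M *ᵥ z) + 2 * (b ⬝ᵥ z)) + (F *ᵥ xhat) ⬝ᵥ (P *ᵥ (F *ᵥ xhat)) := by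
    intro z
    have h5 : (F *ᵥ xhat) ⬝ᵥ (P *ᵥ (G *ᵥ z)) = b ⬝ᵥ z := by
      have h5a : ((P * G)ᵀ *ᵥ (F *ᵥ xhat)) ⬝ᵥ z = (F *ᵥ xhat) ⬝ᵥ ((P * G)ᵀᵀ *ᵥ z) :=
        sep_mulVec_dot _ _ _
      rw [transpose_transpose] at h5a
      have h5b : (P * G)ᵀ *ᵥ (F *ᵥ xhat) = b := by
        rw [transpose_mul, hPs, mulVec_mulVec, hbdef, hBdef]
      rw [mulVec_mulVec, ← h5a, h5b]
    have h6 : (G *ᵥ z) ⬝ᵥ (P *ᵥ (G *ᵥ z)) = z ⬝ᵥ ((Gᵀ * P * G) *ᵥ z) := by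
      rw [sep_mulVec_dot, mulVec_mulVec, mulVec_mulVec, Matrix.mul_assoc]
    have h7 : z ⬝ᵥ (M *ᵥ z) = z ⬝ᵥ (R *ᵥ z) + z ⬝ᵥ ((Gᵀ * P * G) *ᵥ z) := by
      rw [hMdef, add_mulVec, dotProduct_add]
    rw [sep_expand hPs, h5, h6, h7]
    ring
  -- evaluate the expected cost
  have hint : ∀ z : Fin m → ℝ,
      (∫ ω, (z ⬝ᵥ (R *ᵥ z)
          + (F *ᵥ xhat + F *ᵥ e ω + G *ᵥ z) ⬝ᵥ
            (P *ᵥ (F *ᵥ xhat + F *ᵥ e ω + G *ᵥ z))) ∂μ)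
        = (z ⬝ᵥ (M *ᵥ z) + 2 * (b ⬝ᵥ z)) + (F *ᵥ xhat) ⬝ᵥ (P *ᵥ (F *ᵥ xhat))
          + ∫ ω, (F *ᵥ e ω) ⬝ᵥ (P *ᵥ (F *ᵥ e ω)) ∂μ := by
    intro z
    have hpt : (fun ω => z ⬝ᵥ (R *ᵥ z)
          + (F *ᵥ xhat + F *ᵥ e ω + G *ᵥ z) ⬝ᵥ
            (P *ᵥ (F *ᵥ xhat + F *ᵥ e ω + G *ᵥ z)))
        = fun ω => (z ⬝ᵥ (R *ᵥ z)
          + ((F *ᵥ xhat + G *ᵥ z) + F *ᵥ e ω) ⬝ᵥ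
            (P *ᵥ ((F *ᵥ xhat + G *ᵥ z) + F *ᵥ e ω))) := by
      funext ω
      rw [add_right_comm (F *ᵥ xhat) (F *ᵥ e ω) (G *ᵥ z)]
    rw [hpt, sep_integral μ P hPs F e he heP hmean (F *ᵥ xhat + G *ᵥ z) (z ⬝ᵥ (R *ᵥ z))]
    have := hq z
    linarith [hq z]
  obtain ⟨hle, heq⟩ := sep_quad_key hMpd hMsym b v u hvstar
  constructor
  · rw [hint v, hint u]
    linarith
  · intro h
    rw [hint v, hint u] at h
    apply heq
    linarith
end

section
/- Let 0 < p < 1, let Q, Q^f (n×n) and R (m×m) be real symmetric positive definite matrices, and F (n×n), G (n×m) real matrices. Let Π* be an n×n real symmetric positive semidefinite matrix and L* := -(R + GᵀΠ*G)⁻¹(GᵀΠ*F) such that for all x ∈ ℝⁿ: xᵀΠ*x = p·xᵀQ^f x + (1-p)( xᵀQx + (L*x)ᵀR(L*x) + ((F+GL*)x)ᵀΠ*((F+GL*)x) ). Let Π be an n×n real symmetric matrix with Π ≥ Π* (Π - Π* positive semidefinite), let L_Π := -(R + GᵀΠG)⁻¹(GᵀΠF), and define the expected temporal-difference error δ(x)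 := p·xᵀQ^f x + (1-p)( xᵀQx + (L_Πx)ᵀR(L_Πx) + ((F+GL_Π)x)ᵀΠ((F+GL_Π)x) ) - xᵀΠx. Then for every x ∈ ℝⁿ: δ(x) ≤ (1-p)·((F+GL*)x)ᵀ(Π - Π*)((F+GL*)x) - xᵀ(Π - Π*)x. -/
open Matrix

private lemma dot_symm_swap {n : ℕ} (A : Matrix (Fin n) (Fin n) ℝ) (h : Aᵀ = A)
    (x y : Fin n → ℝ) : x ⬝ᵥ (A *ᵥ y) = y ⬝ᵥ (A *ᵥ x) := by
  rw [Matrix.dotProduct_mulVec, ← Matrix.mulVec_transpose, h, dotProduct_comm]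

private lemma dot_mulVec_left {n m : ℕ} (G : Matrix (Fin n) (Fin m) ℝ)
    (u : Fin m → ℝ) (z : Fin n → ℝ) : (G *ᵥ u) ⬝ᵥ z = u ⬝ᵥ (Gᵀ *ᵥ z) := by
  rw [dotProduct_comm, Matrix.dotProduct_mulVec, ← Matrix.mulVec_transpose, dotProduct_comm]

/-- Completion of squares: greedy gain minimizes the one-step Q-function. -/
private lemma greedy_opt {n m : ℕ} (Pi : Matrix (Fin n) (Fin n) ℝ) (hPi : Pi.PosSemidef)
    (R : Matrix (Fin m) (Fin m) ℝ) (hR : R.PosDef)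
    (F : Matrix (Fin n) (Fin n) ℝ) (G : Matrix (Fin n) (Fin m) ℝ)
    (x : Fin n → ℝ) (u : Fin m → ℝ) :
    ((-((R + Gᵀ * Pi * G)⁻¹ * (Gᵀ * Pi * F))) *ᵥ x) ⬝ᵥ
        (R *ᵥ ((-((R + Gᵀ * Pi * G)⁻¹ * (Gᵀ * Pi * F))) *ᵥ x))
      + ((F + G * (-((R + Gᵀ * Pi * G)⁻¹ * (Gᵀ * Pi * F)))) *ᵥ x) ⬝ᵥ
        (Pi *ᵥ ((F + G * (-((R + Gᵀ * Pi * G)⁻¹ * (Gᵀ * Pi * F)))) *ᵥ x))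
    ≤ u ⬝ᵥ (R *ᵥ u) + (F *ᵥ x + G *ᵥ u) ⬝ᵥ (Pi *ᵥ (F *ᵥ x + G *ᵥ u)) := by
  set S : Matrix (Fin m) (Fin m) ℝ := R + Gᵀ * Pi * G with hSdef
  have hGPG : (Gᵀ * Pi * G).PosSemidef := by
    have := hPi.conjTranspose_mul_mul_same G; simpa using this
  have hS : S.PosDef := hR.add_posSemidef hGPG
  have hSsym : Sᵀ = S := hS.isHermitian
  have hPisym : Piᵀ = Pi := hPi.isHermitian
  have hSinv : S * S⁻¹ = 1 := Matrix.mul_nonsing_inv S (isUnit_iff_ne_zero.mpr hS.det_pos.ne')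
  set v : Fin m → ℝ := (S⁻¹ * (Gᵀ * Pi * F)) *ᵥ x with hvdef
  set w : Fin n → ℝ := F *ᵥ x with hwdef
  have hSv : S *ᵥ v = Gᵀ *ᵥ (Pi *ᵥ w) := by
    rw [hvdef, Matrix.mulVec_mulVec, ← Matrix.mul_assoc, hSinv, Matrix.one_mul,
      hwdef, Matrix.mulVec_mulVec, Matrix.mulVec_mulVec]
  -- L *ᵥ x = -v, and (F + G*L) *ᵥ x = w + G *ᵥ (-v)
  have hLx : (-((R + Gᵀ * Pi * G)⁻¹ * (Gᵀ * Pi * F))) *ᵥ x = -v := by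
    rw [Matrix.neg_mulVec, hvdef, hSdef]
  have hFL : (F + G * (-((R + Gᵀ * Pi * G)⁻¹ * (Gᵀ * Pi * F)))) *ᵥ x = w + G *ᵥ (-v) := by
    rw [Matrix.add_mulVec, ← Matrix.mulVec_mulVec, hLx, hwdef]
  rw [hLx, hFL]
  -- quadratic expansion: for any z, z⬝ᵥRz + (w+Gz)⬝ᵥΠ(w+Gz) = z⬝ᵥSz + 2 z⬝ᵥ(S v) + w⬝ᵥΠw
  have hexp : ∀ z : Fin m → ℝ,
      z ⬝ᵥ (R *ᵥ z) + (w + G *ᵥ z) ⬝ᵥ (Pi *ᵥ (w + G *ᵥ z))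
        = z ⬝ᵥ (S *ᵥ z) + 2 * (z ⬝ᵥ (S *ᵥ v)) + w ⬝ᵥ (Pi *ᵥ w) := by
    intro z
    rw [hSv]
    have h1 : (w + G *ᵥ z) ⬝ᵥ (Pi *ᵥ (w + G *ᵥ z))
        = w ⬝ᵥ (Pi *ᵥ w) + 2 * (z ⬝ᵥ (Gᵀ *ᵥ (Pi *ᵥ w))) + z ⬝ᵥ ((Gᵀ * Pi * G) *ᵥ z) := by
      rw [Matrix.mulVec_add, dotProduct_add, add_dotProduct, add_dotProduct]
      rw [dot_mulVec_left G z (Pi *ᵥ w)]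
      rw [dot_symm_swap Pi hPisym w (G *ᵥ z), dot_mulVec_left G z (Pi *ᵥ w)]
      have h2 : (G *ᵥ z) ⬝ᵥ (Pi *ᵥ (G *ᵥ z)) = z ⬝ᵥ ((Gᵀ * Pi * G) *ᵥ z) := by
        rw [dot_mulVec_left G z (Pi *ᵥ (G *ᵥ z)), Matrix.mulVec_mulVec, Matrix.mulVec_mulVec]
      rw [h2]; ring
    rw [h1, hSdef, Matrix.add_mulVec, dotProduct_add]; ring
  have hu := hexp u
  have hv' := hexp (-v)
  -- value at -v simplifies
  have hSnegv : S *ᵥ (-v) = -(S *ᵥ v) := by rw [Matrix.mulVec_neg]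
  have hvv : (-v) ⬝ᵥ (S *ᵥ (-v)) = v ⬝ᵥ (S *ᵥ v) := by
    rw [hSnegv, neg_dotProduct, dotProduct_neg, neg_neg]
  have hvb : (-v) ⬝ᵥ (S *ᵥ v) = -(v ⬝ᵥ (S *ᵥ v)) := by rw [neg_dotProduct]
  -- key positivity: (u+v)ᵀ S (u+v) ≥ 0
  have hpos : 0 ≤ (u + v) ⬝ᵥ (S *ᵥ (u + v)) := by simpa using hS.posSemidef.dotProduct_mulVec_nonneg (u + v)
  have hswap : v ⬝ᵥ (S *ᵥ u) = u ⬝ᵥ (S *ᵥ v) := dot_symm_swap S hSsym v u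
  have hquad : (u + v) ⬝ᵥ (S *ᵥ (u + v))
      = u ⬝ᵥ (S *ᵥ u) + 2 * (u ⬝ᵥ (S *ᵥ v)) + v ⬝ᵥ (S *ᵥ v) := by
    rw [Matrix.mulVec_add, dotProduct_add, add_dotProduct, add_dotProduct, hswap]; ring
  rw [hquad] at hpos
  linarith [hu, hv', hvv, hvb]

/-- Upper bound on the expected TD error. If `Π*` satisfies the Bellman fixed-point
equation with optimal greedy gain `L*`, and `Π ≥ Π*` is symmetric with greedy gain `L_Π`, then
the expected TD error `δ(x)` under the greedy action satisfies
`δ(x) ≤ (1-p)((F+GL*)x)ᵀ(Π-Π*)((F+GL*)x) - xᵀ(Π-Π*)x`. -/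
theorem expected_td_error_upper_bound
    {n m : ℕ} (p : ℝ) (hp : 0 < p) (hp1 : p < 1)
    (Q Qf : Matrix (Fin n) (Fin n) ℝ) (R : Matrix (Fin m) (Fin m) ℝ)
    (hQ : Q.PosDef) (hQf : Qf.PosDef) (hR : R.PosDef)
    (F : Matrix (Fin n) (Fin n) ℝ) (G : Matrix (Fin n) (Fin m) ℝ)
    (Pst : Matrix (Fin n) (Fin n) ℝ) (hPst : Pst.PosSemidef)
    (hBellman : ∀ x : Fin n → ℝ,
      x ⬝ᵥ (Pst *ᵥ x)
        = p * (x ⬝ᵥ (Qf *ᵥ x))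
          + (1 - p) * (x ⬝ᵥ (Q *ᵥ x)
            + ((-((R + Gᵀ * Pst * G)⁻¹ * (Gᵀ * Pst * F))) *ᵥ x) ⬝ᵥ
                (R *ᵥ ((-((R + Gᵀ * Pst * G)⁻¹ * (Gᵀ * Pst * F))) *ᵥ x))
            + ((F + G * (-((R + Gᵀ * Pst * G)⁻¹ * (Gᵀ * Pst * F)))) *ᵥ x) ⬝ᵥ
                (Pst *ᵥ ((F + G * (-((R + Gᵀ * Pst * G)⁻¹ * (Gᵀ * Pst * F)))) *ᵥ x))))
    (P : Matrix (Fin n) (Fin n) ℝ) (hPsym : Pᵀ = P) (hle : (P - Pst).PosSemidef) :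
    ∀ x : Fin n → ℝ,
      (p * (x ⬝ᵥ (Qf *ᵥ x))
        + (1 - p) * (x ⬝ᵥ (Q *ᵥ x)
          + ((-((R + Gᵀ * P * G)⁻¹ * (Gᵀ * P * F))) *ᵥ x) ⬝ᵥ
              (R *ᵥ ((-((R + Gᵀ * P * G)⁻¹ * (Gᵀ * P * F))) *ᵥ x))
          + ((F + G * (-((R + Gᵀ * P * G)⁻¹ * (Gᵀ * P * F)))) *ᵥ x) ⬝ᵥ
              (P *ᵥ ((F + G * (-((R + Gᵀ * P * G)⁻¹ * (Gᵀ * P * F)))) *ᵥ x)))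
        - x ⬝ᵥ (P *ᵥ x))
      ≤ (1 - p) * (((F + G * (-((R + Gᵀ * Pst * G)⁻¹ * (Gᵀ * Pst * F)))) *ᵥ x) ⬝ᵥ
            ((P - Pst) *ᵥ ((F + G * (-((R + Gᵀ * Pst * G)⁻¹ * (Gᵀ * Pst * F)))) *ᵥ x)))
        - x ⬝ᵥ ((P - Pst) *ᵥ x) := by
  intro x
  have hPpsd : P.PosSemidef := by
    have h := hPst.add hle
    have e : Pst + (P - Pst) = P := by abel
    rwa [e] at h
  set Lst : Matrix (Fin m) (Fin n) ℝ := -((R + Gᵀ * Pst * G)⁻¹ * (Gᵀ * Pst * F)) with hLstdef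
  have hkey := greedy_opt P hPpsd R hR F G x (Lst *ᵥ x)
  have hFG : F *ᵥ x + G *ᵥ (Lst *ᵥ x) = (F + G * Lst) *ᵥ x := by
    rw [Matrix.add_mulVec, Matrix.mulVec_mulVec]
  rw [hFG] at hkey
  set y : Fin n → ℝ := (F + G * Lst) *ᵥ x with hydef
  have hsplit : ∀ z : Fin n → ℝ, z ⬝ᵥ ((P - Pst) *ᵥ z) = z ⬝ᵥ (P *ᵥ z) - z ⬝ᵥ (Pst *ᵥ z) := by
    intro z
    rw [Matrix.sub_mulVec, dotProduct_sub]
  have hB := hBellman x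
  have h1p : (0:ℝ) ≤ 1 - p := by linarith
  have hmul := mul_le_mul_of_nonneg_left hkey h1p
  rw [hsplit y, hsplit x]
  nlinarith [hmul, hB]
end
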